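/- arXiv:0708.0224 — 5 statements merged into one kernel-verified Lean document; each statement's English description precedes it below -/
import Mathlib

section
/- Let w : [0,∞) → ℝ be bounded, continuous, nondecreasing and nonpositive, and define (Gw)(φ) = ∫_0^φ ψ(z)·z^{γ−2}·e^{−β/z}·(g(z) + λ₀·(Kw)(z)) dz for φ > 0. Then: (i) the integrand is Lebesgue integrable on (0, φ) for every φ > 0, so Gw is well defined; (ii) the equation (Gw)(φ) = 0 has exactly one solution φ[w] in (0,∞); (iii) (Gw)(φ) < 0 for every φ ∈ (0, φ[w]) and (Gw)(φ) > 0 for every φ ∈ (φ[w], ∞); (iv) φ_ℓ[w] ≤ φ[w] ≤ φ[w₀], where φ_ℓ[w] denotes the unique positive zero of φ ↦ g(φ) + λ₀·(Kw)(φ) and w₀ denotes the constant function equal to −sup_{x≥0}|w(x)|. -/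
/-!
Write the integrand of `Gw` as `ρ q` with `ρ(z) = ψ(z) z^(γ-2) e^(-β/z) > 0` and
`q(z) = z - λ/c + λ₀ (Kw)(z)`. Since `w` is nondecreasing with values in `[w(0), 0]`, so is `Kw`;
hence `q` is strictly increasing, negative on `(0, z₀)` and positive beyond some `z₀ ≥ λ/c`,
and `Gw` is negative on `(0, z₀]` and strictly increasing after `z₀`.
The ODE for `ψ` says that `ρ` is the derivative of `μ²/(2(λ+λ₀)) · ψ'/S'`, which is nonnegative
because `ψ` is nondecreasing. This makes `ρ` integrable at `0` (so `q` bounded gives (i)), and the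
growth condition `ψ'/S' → ∞` forces `Gw → ∞`, so `Gw` has exactly one zero `φ[w] > z₀ ≥ φ_ℓ[w]`.
Finally `w₀ ≡ w(0) ≤ Kw`, so `Gw₀ ≤ Gw` and `Gw(φ[w₀]) ≥ 0` gives `φ[w] ≤ φ[w₀]`.
-/

open MeasureTheory

/-- The jump operator `K`: `(Kw)(φ) = ∫_E w((λ₁/λ₀) f(z) φ) ν₀(dz)`. -/
noncomputable def Kop {E : Type*} [MeasurableSpace E] (ν₀ : Measure E)
    (f : E → ℝ) (lam0 lam1 : ℝ) (w : ℝ → ℝ) (φ : ℝ) : ℝ :=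
  ∫ z, w (lam1 / lam0 * f z * φ) ∂ν₀

/-- The function `Gw` of (4.17):
`(Gw)(φ) = ∫_0^φ ψ(z) z^(γ-2) e^(-β/z) (g(z) + λ₀ (Kw)(z)) dz`. -/
noncomputable def Gop {E : Type*} [MeasurableSpace E] (ν₀ : Measure E)
    (f : E → ℝ) (lam lam0 lam1 c γ β : ℝ) (ψ : ℝ → ℝ) (w : ℝ → ℝ) (φ : ℝ) : ℝ :=
  ∫ z in Set.Ioo (0 : ℝ) φ,
    ψ z * z ^ (γ - 2) * Real.exp (-β / z) *
      ((z - lam / c) + lam0 * Kop ν₀ f lam0 lam1 w z)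

open Set Filter Topology intervalIntegral

theorem integrableOn_Ioc_of_hasDerivAt_of_nonneg {g g' : ℝ → ℝ} {a b m : ℝ}
    (hderiv : ∀ x ∈ Ioc a b, HasDerivAt g (g' x) x) (hg' : ∀ x ∈ Ioc a b, 0 ≤ g' x)
    (hm : ∀ x ∈ Ioc a b, m ≤ g x) : IntegrableOn g' (Ioc a b) := by
  rcases le_or_gt b a with hba | hab
  · simp [Ioc_eq_empty_of_le hba]
  set u : ℕ → ℝ := fun n => a + 1 / ((n : ℝ) + 1)
  have hu : Tendsto u atTop (𝓝 a) := by
    simpa only [add_zero] using tendsto_one_div_add_atTop_nhds_zero_nat.const_add a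
  have hau : ∀ n, a < u n := fun n => lt_add_of_pos_right a Nat.one_div_pos_of_nat
  have hsub : ∀ n, Ioc (u n) b ⊆ Ioc a b := fun n => Ioc_subset_Ioc_left (hau n).le
  have hint : ∀ n, IntegrableOn g' (Ioc (u n) b) := fun n =>
    integrableOn_deriv_of_nonneg
      (HasDerivAt.continuousOn fun x hx => hderiv x ⟨(hau n).trans_le hx.1, hx.2⟩)
      (fun x hx => hderiv x (hsub n (Ioo_subset_Ioc_self hx)))
      (fun x hx => hg' x (hsub n (Ioo_subset_Ioc_self hx)))
  refine integrableOn_Ioc_of_intervalIntegral_norm_bounded_left (I := g b - m) hint hu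
    ((hu.eventually (gt_mem_nhds hab)).mono fun n hn => ?_)
  have hftc : ∫ x in u n..b, g' x = g b - g (u n) :=
    integral_eq_sub_of_hasDerivAt
      (fun x hx => hderiv x ⟨(hau n).trans_le (uIcc_of_lt hn ▸ hx).1, (uIcc_of_lt hn ▸ hx).2⟩)
      ((intervalIntegrable_iff_integrableOn_Ioc_of_le hn.le).2 (hint n))
  calc ∫ x in Ioc (u n) b, ‖g' x‖ = ∫ x in u n..b, g' x := by
        rw [integral_of_le hn.le]
        refine setIntegral_congr_fun measurableSet_Ioc fun x hx => ?_
        exact Real.norm_of_nonneg (hg' x (hsub n hx))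
    _ ≤ g b - m := by linarith [hm (u n) ⟨hau n, hn.le⟩]

theorem IntegrableOn.mul_of_monotoneOn {ρ q : ℝ → ℝ} {a b : ℝ} (hab : a ≤ b)
    (hρ : IntegrableOn ρ (Ioc a b)) (hq : MonotoneOn q (Icc a b)) :
    IntegrableOn (fun z => ρ z * q z) (Ioc a b) :=
  hρ.mul_of_top_left <| (hq.memLp_top (isLeast_Icc hab) (isGreatest_Icc hab)
    measurableSet_Icc).mono_measure (Measure.restrict_mono Ioc_subset_Icc_self le_rfl)

theorem StrictMonoOn.exists_sign_change {q : ℝ → ℝ} (hq : StrictMonoOn q (Ioi 0)) {a b : ℝ}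
    (ha : 0 < a) (hb : 0 < b) (hqa : q a ≤ 0) (hqb : 0 < q b) :
    ∃ z₀, a ≤ z₀ ∧ (∀ z ∈ Ioo 0 z₀, q z < 0) ∧ ∀ z, z₀ < z → 0 < q z := by
  set S := {z | 0 < z ∧ 0 ≤ q z}
  have hS : S.Nonempty := ⟨b, hb, hqb.le⟩
  have hSa : ∀ t ∈ S, a ≤ t := fun t ht => by
    by_contra! hta
    exact (hq ht.1 ha hta).not_ge (ht.2.trans' hqa)
  refine ⟨sInf S, le_csInf hS hSa, fun z hz => ?_, fun z hz => ?_⟩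
  · by_contra! hqz
    exact hz.2.not_ge (csInf_le ⟨0, fun t ht => ht.1.le⟩ ⟨hz.1, hqz⟩)
  · obtain ⟨t, htS, htz⟩ := exists_lt_of_csInf_lt hS hz
    exact htS.2.trans_lt (hq htS.1 (htS.1.trans htz) htz)

theorem tendsto_integral_atTop_of_le_mul_deriv {F g g' : ℝ → ℝ} {a₀ a m : ℝ} (hm : 0 < m)
    (hF : ∀ b, a ≤ b → IntervalIntegrable F volume a₀ b)
    (hderiv : ∀ x, a ≤ x → HasDerivAt g (g' x) x)
    (hg' : ∀ b, a ≤ b → IntervalIntegrable g' volume a b)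
    (hle : ∀ x, a ≤ x → m * g' x ≤ F x) (hg : Tendsto g atTop atTop) :
    Tendsto (fun b => ∫ x in a₀..b, F x) atTop atTop := by
  refine tendsto_atTop_mono' _ ((eventually_ge_atTop a).mono fun b hab => ?_)
    (tendsto_atTop_add_const_left _ (∫ x in a₀..a, F x)
      ((tendsto_atTop_add_const_right _ (-g a) hg).const_mul_atTop hm))
  have hFa := hF a le_rfl
  have hFab : IntervalIntegrable F volume a b := hFa.symm.trans (hF b hab)
  calc (∫ x in a₀..a, F x) + m * (g b + -g a)
        = (∫ x in a₀..a, F x) + ∫ x in a..b, m * g' x := by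
        rw [intervalIntegral.integral_const_mul, integral_eq_sub_of_hasDerivAt _ (hg' b hab)]
        · ring
        · intro x hx
          exact hderiv x (uIcc_of_le hab ▸ hx).1
    _ ≤ (∫ x in a₀..a, F x) + ∫ x in a..b, F x := by
        gcongr
        exact integral_mono_on hab ((hg' b hab).const_mul m) hFab fun x hx => hle x hx.1
    _ = ∫ x in a₀..b, F x := integral_add_adjacent_intervals hFa hFab

theorem exists_zero_of_integral_sign_change {F : ℝ → ℝ} {z₀ : ℝ} (hz₀ : 0 < z₀)
    (hF : ∀ b, 0 < b → IntervalIntegrable F volume 0 b)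
    (hneg : ∀ z ∈ Ioo 0 z₀, F z < 0) (hpos : ∀ z, z₀ < z → 0 < F z)
    (htop : Tendsto (fun b => ∫ x in 0..b, F x) atTop atTop) :
    ∃ φ, z₀ < φ ∧ ∫ x in 0..φ, F x = 0 ∧
      (∀ b ∈ Ioo 0 φ, ∫ x in 0..b, F x < 0) ∧ ∀ b, φ < b → 0 < ∫ x in 0..b, F x := by
  set G := fun b => ∫ x in 0..b, F x
  have hG_neg : ∀ b ∈ Ioc 0 z₀, G b < 0 := fun b hb => by
    have := intervalIntegral_pos_of_pos_on (hF b hb.1).neg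
      (fun x hx => neg_pos.2 (hneg x ⟨hx.1, hx.2.trans_le hb.2⟩)) hb.1
    rwa [Pi.neg_def, intervalIntegral.integral_neg, neg_pos] at this
  have hG_lt : ∀ x y, z₀ ≤ x → x < y → G x < G y := fun x y hx hxy => by
    have hx0 : 0 < x := hz₀.trans_le hx
    have := intervalIntegral_pos_of_pos_on ((hF x hx0).symm.trans (hF y (hx0.trans hxy)))
      (fun z hz => hpos z (hx.trans_lt hz.1)) hxy
    rw [← integral_interval_sub_left (hF y (hx0.trans hxy)) (hF x hx0)] at this
    exact sub_pos.1 this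
  obtain ⟨b, hGb, hb⟩ := ((htop.eventually_gt_atTop 0).and (eventually_gt_atTop 0)).exists
  have hz₀b : z₀ < b := by
    by_contra! h
    exact (hG_neg b ⟨hb, h⟩).not_gt hGb
  obtain ⟨φ, hφ, hGφ⟩ := intermediate_value_Ioo hz₀b.le
    ((continuousOn_primitive_interval' (hF b hb) left_mem_uIcc).mono
      (by rw [uIcc_of_le hb.le]; exact Icc_subset_Icc_left hz₀.le))
    ⟨hG_neg z₀ ⟨hz₀, le_rfl⟩, hGb⟩
  refine ⟨φ, hφ.1, hGφ, fun x hx => ?_, fun x hx => hGφ.symm.trans_lt (hG_lt φ x hφ.1.le hx)⟩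
  rcases le_or_gt x z₀ with hxz | hxz
  · exact hG_neg x ⟨hx.1, hxz⟩
  · exact (hG_lt x φ hxz.le hx.2).trans_eq hGφ

section Kop

variable {E : Type*} [MeasurableSpace E] {ν₀ : Measure E} {f : E → ℝ} {lam0 lam1 : ℝ}
  {w : ℝ → ℝ}

theorem integrable_Kop_integrand [IsFiniteMeasure ν₀] (hf : Measurable f) (hf0 : ∀ z, 0 ≤ f z)
    (hκ : 0 ≤ lam1 / lam0) (hw : MonotoneOn w (Ici 0)) (hwnp : ∀ x, 0 ≤ x → w x ≤ 0)
    {φ : ℝ} (hφ : 0 ≤ φ) : Integrable (fun z => w (lam1 / lam0 * f z * φ)) ν₀ := by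
  have harg z : 0 ≤ lam1 / lam0 * f z * φ := mul_nonneg (mul_nonneg hκ (hf0 z)) hφ
  -- `w ∘ max · 0` is monotone on all of `ℝ`, hence measurable.
  have hmeas : Measurable fun x => w (max x 0) :=
    Monotone.measurable fun x y hxy =>
      hw (le_max_right x 0) (le_max_right y 0) (max_le_max_right 0 hxy)
  refine Integrable.of_bound (C := -w 0) ?_ (Eventually.of_forall fun z => ?_)
  · have hcomp : (fun z => w (lam1 / lam0 * f z * φ))
        = (fun x => w (max x 0)) ∘ fun z => lam1 / lam0 * f z * φ :=
      funext fun z => by simp only [Function.comp, max_eq_left (harg z)]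
    rw [hcomp]
    exact (hmeas.comp (by fun_prop)).aestronglyMeasurable
  · rw [Real.norm_of_nonpos (hwnp _ (harg z)), neg_le_neg_iff]
    exact hw self_mem_Ici (harg z) (harg z)

theorem Kop_monotoneOn [IsFiniteMeasure ν₀] (hf : Measurable f) (hf0 : ∀ z, 0 ≤ f z)
    (hκ : 0 ≤ lam1 / lam0) (hw : MonotoneOn w (Ici 0)) (hwnp : ∀ x, 0 ≤ x → w x ≤ 0) :
    MonotoneOn (Kop ν₀ f lam0 lam1 w) (Ici 0) := fun _ hx _ hy hxy =>
  integral_mono (integrable_Kop_integrand hf hf0 hκ hw hwnp hx)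
    (integrable_Kop_integrand hf hf0 hκ hw hwnp hy) fun z =>
      hw (mul_nonneg (mul_nonneg hκ (hf0 z)) hx) (mul_nonneg (mul_nonneg hκ (hf0 z)) hy)
        (mul_le_mul_of_nonneg_left hxy (mul_nonneg hκ (hf0 z)))

theorem Kop_mem_Icc [IsProbabilityMeasure ν₀] (hf : Measurable f) (hf0 : ∀ z, 0 ≤ f z)
    (hκ : 0 ≤ lam1 / lam0) (hw : MonotoneOn w (Ici 0)) (hwnp : ∀ x, 0 ≤ x → w x ≤ 0)
    {φ : ℝ} (hφ : 0 ≤ φ) : Kop ν₀ f lam0 lam1 w φ ∈ Icc (w 0) 0 := by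
  have harg z : 0 ≤ lam1 / lam0 * f z * φ := mul_nonneg (mul_nonneg hκ (hf0 z)) hφ
  refine ⟨?_, integral_nonpos fun z => hwnp _ (harg z)⟩
  calc w 0 = ∫ _, w 0 ∂ν₀ := by simp
    _ ≤ Kop ν₀ f lam0 lam1 w φ := integral_mono (integrable_const _)
        (integrable_Kop_integrand hf hf0 hκ hw hwnp hφ) fun z => hw self_mem_Ici (harg z) (harg z)

theorem Kop_const [IsProbabilityMeasure ν₀] (C φ : ℝ) :
    Kop ν₀ f lam0 lam1 (fun _ => C) φ = C := by
  simp [Kop]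

end Kop

theorem sSup_abs_image_Ici_eq {w : ℝ → ℝ} (hw : MonotoneOn w (Ici 0))
    (hwnp : ∀ x, 0 ≤ x → w x ≤ 0) : sSup ((fun x => |w x|) '' Ici 0) = -w 0 := by
  refine IsGreatest.csSup_eq ⟨⟨0, self_mem_Ici, abs_of_nonpos (hwnp 0 le_rfl)⟩, ?_⟩
  rintro _ ⟨x, hx, rfl⟩
  change |w x| ≤ -w 0
  rw [abs_of_nonpos (hwnp x hx), neg_le_neg_iff]
  exact hw self_mem_Ici hx hx

-- `y ^ γ * exp (-β / y)` is `1 / S'(y)` and `z ^ (γ - 2) * exp (-β / z)` is the speed density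
-- up to the factor `μ ^ 2 / 2`, so this is the generator identity `(ψ' / S')' = (λ + λ₀) ψ m`.
theorem hasDerivAt_deriv_div_scale {lam lam0 μ a γ β : ℝ} {ψ : ℝ → ℝ} (hμ : μ ≠ 0)
    (hlam : lam + lam0 ≠ 0) (hγ : γ = 2 * a / μ ^ 2) (hβ : β = 2 * lam / μ ^ 2)
    (hψsmooth : ContDiffOn ℝ 2 ψ (Ioi 0))
    (hψode : ∀ y : ℝ, 0 < y →
      μ ^ 2 / 2 * y ^ 2 * deriv (deriv ψ) y + (lam + a * y) * deriv ψ y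
        = (lam + lam0) * ψ y)
    {z : ℝ} (hz : 0 < z) :
    HasDerivAt
      (fun y => μ ^ 2 / (2 * (lam + lam0)) * (deriv ψ y * y ^ γ * Real.exp (-β / y)))
      (ψ z * z ^ (γ - 2) * Real.exp (-β / z)) z := by
  have hψ' : HasDerivAt (deriv ψ) (deriv (deriv ψ) z) z :=
    (((hψsmooth.deriv_of_isOpen isOpen_Ioi (m := 1) (by norm_num)).differentiableOn
      one_ne_zero).differentiableAt (Ioi_mem_nhds hz)).hasDerivAt
  have hexp : HasDerivAt (fun y => Real.exp (-β / y)) (Real.exp (-β / z) * (β / z ^ 2)) z := by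
    have := ((hasDerivAt_inv hz.ne').const_mul (-β)).exp
    convert this using 1
    · ext y; simp [div_eq_mul_inv]
    · field_simp
  refine (((hψ'.mul (Real.hasDerivAt_rpow_const (p := γ) (Or.inl hz.ne'))).mul hexp).const_mul
    _).congr_deriv ?_
  have hz1 : z ^ (γ - 1) = z ^ (γ - 2) * z := by
    rw [← Real.rpow_add_one hz.ne']; ring_nf
  have hz2 : z ^ γ = z ^ (γ - 2) * z ^ 2 := by
    rw [← Real.rpow_natCast, ← Real.rpow_add hz]; ring_nf
  have hγ' : μ ^ 2 * γ = 2 * a := by rw [hγ]; field_simp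
  have hβ' : μ ^ 2 * β = 2 * lam := by rw [hβ]; field_simp
  simp only [Pi.mul_apply]
  rw [hz1, hz2]
  field_simp
  linear_combination 2 * hψode z hz + z * deriv ψ z * hγ' + deriv ψ z * hβ'

theorem integrableOn_Ioc_psi_weight {lam lam0 μ a γ β : ℝ} {ψ : ℝ → ℝ} (hμ : μ ≠ 0)
    (hlam : 0 < lam + lam0) (hγ : γ = 2 * a / μ ^ 2) (hβ : β = 2 * lam / μ ^ 2)
    (hψsmooth : ContDiffOn ℝ 2 ψ (Ioi 0)) (hψpos : ∀ y, 0 < y → 0 < ψ y)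
    (hψmono : MonotoneOn ψ (Ioi 0))
    (hψode : ∀ y : ℝ, 0 < y →
      μ ^ 2 / 2 * y ^ 2 * deriv (deriv ψ) y + (lam + a * y) * deriv ψ y
        = (lam + lam0) * ψ y)
    (φ : ℝ) : IntegrableOn (fun z => ψ z * z ^ (γ - 2) * Real.exp (-β / z)) (Ioc 0 φ) := by
  refine integrableOn_Ioc_of_hasDerivAt_of_nonneg (m := 0)
    (fun z hz => hasDerivAt_deriv_div_scale hμ hlam.ne' hγ hβ hψsmooth hψode hz.1)
    (fun z ⟨hz, _⟩ => ?_) (fun y ⟨hy, _⟩ => ?_)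
  · have := hψpos z hz
    positivity
  · have : 0 ≤ deriv ψ y := by
      rw [← derivWithin_of_isOpen isOpen_Ioi hy]
      exact hψmono.derivWithin_nonneg
    positivity

section WeightedPrimitive

variable {ρ g K : ℝ → ℝ} {r l m : ℝ}

theorem integrableOn_Ioc_mul_affine {φ : ℝ} (hφ : 0 ≤ φ) (hρ : IntegrableOn ρ (Ioc 0 φ))
    (hl : 0 ≤ l) (hK : MonotoneOn K (Ici 0)) :
    IntegrableOn (fun z => ρ z * (z - r + l * K z)) (Ioc 0 φ) :=
  IntegrableOn.mul_of_monotoneOn hφ hρ fun x hx y hy hxy => by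
    have := mul_le_mul_of_nonneg_left (hK hx.1 hy.1 hxy) hl
    linarith

theorem exists_zero_of_integral_mul_affine (hρ : ∀ z, 0 < z → HasDerivAt g (ρ z) z)
    (hρ_pos : ∀ z, 0 < z → 0 < ρ z) (hρ_int : ∀ b, IntegrableOn ρ (Ioc 0 b))
    (hg : Tendsto g atTop atTop) (hr : 0 < r) (hl : 0 ≤ l)
    (hK : MonotoneOn K (Ici 0)) (hKm : ∀ z, 0 ≤ z → K z ∈ Icc m 0) :
    ∃ φ, 0 < φ ∧ (∀ z, 0 < z → z - r + l * K z = 0 → z < φ) ∧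
      ∫ z in 0..φ, ρ z * (z - r + l * K z) = 0 ∧
      (∀ b, 0 < b → ∫ z in 0..b, ρ z * (z - r + l * K z) = 0 → b = φ) ∧
      (∀ b ∈ Ioo 0 φ, ∫ z in 0..b, ρ z * (z - r + l * K z) < 0) ∧
      ∀ b, φ < b → 0 < ∫ z in 0..b, ρ z * (z - r + l * K z) := by
  set q := fun z => z - r + l * K z
  have hq_bounds : ∀ z, 0 ≤ z → z - r + l * m ≤ q z ∧ q z ≤ z - r := fun z hz => by
    have := mul_le_mul_of_nonneg_left (hKm z hz).1 hl
    have := mul_nonpos_of_nonneg_of_nonpos hl (hKm z hz).2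
    constructor <;> linarith
  have hq_mono : StrictMonoOn q (Ioi 0) := fun x hx y hy hxy => by
    have := mul_le_mul_of_nonneg_left
      (hK (Ioi_subset_Ici_self hx) (Ioi_subset_Ici_self hy) hxy.le) hl
    simp only [q]
    linarith
  -- Beyond `z₁` the affine factor `q` is at least `1`.
  set z₁ := r - l * m + 1
  have hz₁ : 0 < z₁ := by
    linarith [mul_nonpos_of_nonneg_of_nonpos hl ((hKm 0 le_rfl).1.trans (hKm 0 le_rfl).2)]
  obtain ⟨z₀, hz₀, hq_neg, hq_pos⟩ := hq_mono.exists_sign_change hr hz₁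
    (by linarith [(hq_bounds r hr.le).2]) (by linarith [(hq_bounds z₁ hz₁.le).1])
  have hF : ∀ b, 0 ≤ b → IntervalIntegrable (fun z => ρ z * q z) volume 0 b := fun b hb =>
    (intervalIntegrable_iff_integrableOn_Ioc_of_le hb).2
      (integrableOn_Ioc_mul_affine hb (hρ_int b) hl hK)
  have htop : Tendsto (fun b => ∫ z in 0..b, ρ z * q z) atTop atTop := by
    refine tendsto_integral_atTop_of_le_mul_deriv one_pos (a := z₁)
      (fun b hb => hF b (hz₁.le.trans hb)) (fun x hx => hρ x (hz₁.trans_le hx))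
      (fun b hb => ?_) (fun x hx => ?_) hg
    · exact (intervalIntegrable_iff_integrableOn_Ioc_of_le hb).2
        ((hρ_int b).mono_set (Ioc_subset_Ioc_left hz₁.le))
    · have := hq_bounds x (hz₁.le.trans hx)
      nlinarith [hρ_pos x (hz₁.trans_le hx)]
  obtain ⟨φ, hz₀φ, hzero, hneg, hpos⟩ := exists_zero_of_integral_sign_change
    (hr.trans_le hz₀) (fun b hb => hF b hb.le)
    (fun z hz => mul_neg_of_pos_of_neg (hρ_pos z hz.1) (hq_neg z hz))
    (fun z hz => mul_pos (hρ_pos z (hr.trans_le (hz₀.trans hz.le))) (hq_pos z hz)) htop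
  refine ⟨φ, hr.trans_le (hz₀.trans hz₀φ.le), fun z hz hqz => ?_, hzero, fun b hb hb0 => ?_,
    hneg, hpos⟩
  · by_contra! h
    exact (hq_pos z (hz₀φ.trans_le h)).ne' hqz
  · rcases lt_trichotomy b φ with h | h | h
    · exact absurd hb0 (hneg b ⟨hb, h⟩).ne
    · exact h
    · exact absurd hb0 (hpos b h).ne'

end WeightedPrimitive

theorem Gop_eq_intervalIntegral {E : Type*} [MeasurableSpace E] (ν₀ : Measure E) (f : E → ℝ)
    (lam lam0 lam1 c γ β : ℝ) (ψ w : ℝ → ℝ) {φ : ℝ} (hφ : 0 ≤ φ) :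
    Gop ν₀ f lam lam0 lam1 c γ β ψ w φ = ∫ z in 0..φ,
      ψ z * z ^ (γ - 2) * Real.exp (-β / z) * ((z - lam / c) + lam0 * Kop ν₀ f lam0 lam1 w z) := by
  rw [Gop, integral_of_le hφ, integral_Ioc_eq_integral_Ioo]

section Gop

variable {E : Type*} [MeasurableSpace E] {ν₀ : Measure E} {f : E → ℝ}
  {lam lam0 lam1 c γ β : ℝ} {ψ w : ℝ → ℝ}

theorem Gop_le_Gop_of_Kop_le {w' : ℝ → ℝ} {φ : ℝ} (hlam0 : 0 ≤ lam0)
    (hψ : ∀ z ∈ Ioo 0 φ, 0 ≤ ψ z)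
    (hint' : IntegrableOn (fun z => ψ z * z ^ (γ - 2) * Real.exp (-β / z) *
      ((z - lam / c) + lam0 * Kop ν₀ f lam0 lam1 w' z)) (Ioo 0 φ))
    (hint : IntegrableOn (fun z => ψ z * z ^ (γ - 2) * Real.exp (-β / z) *
      ((z - lam / c) + lam0 * Kop ν₀ f lam0 lam1 w z)) (Ioo 0 φ))
    (hK : ∀ z ∈ Ioo 0 φ, Kop ν₀ f lam0 lam1 w' z ≤ Kop ν₀ f lam0 lam1 w z) :
    Gop ν₀ f lam lam0 lam1 c γ β ψ w' φ ≤ Gop ν₀ f lam lam0 lam1 c γ β ψ w φ := by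
  refine setIntegral_mono_on hint' hint measurableSet_Ioo fun z hz => ?_
  have := hψ z hz
  have := hz.1
  exact mul_le_mul_of_nonneg_left (by linarith [mul_le_mul_of_nonneg_left (hK z hz) hlam0])
    (by positivity)

end Gop

theorem lemma_4_2_general
    {E : Type*} [MeasurableSpace E] (ν₀ : Measure E) [IsProbabilityMeasure ν₀]
    (f : E → ℝ) (hf : Measurable f) (hf0 : ∀ z, 0 ≤ f z)
    (lam lam0 lam1 c : ℝ)
    (hlam : 0 < lam) (hlam0 : 0 < lam0) (hlam1 : 0 < lam1) (hc : 0 < c)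
    (μ a : ℝ) (hμ : μ ≠ 0) (γ β : ℝ) (hγ : γ = 2 * a / μ ^ 2) (hβ : β = 2 * lam / μ ^ 2)
    (ψ : ℝ → ℝ)
    (hψsmooth : ContDiffOn ℝ 2 ψ (Set.Ioi (0 : ℝ)))
    (hψpos : ∀ y : ℝ, 0 < y → 0 < ψ y)
    (hψmono : ∀ x y : ℝ, 0 < x → x ≤ y → ψ x ≤ ψ y)
    (hψode : ∀ y : ℝ, 0 < y →
      μ ^ 2 / 2 * y ^ 2 * deriv (deriv ψ) y + (lam + a * y) * deriv ψ y
        = (lam + lam0) * ψ y)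
    (hψgrowth : Filter.Tendsto (fun y : ℝ => deriv ψ y * y ^ γ * Real.exp (-β / y))
      Filter.atTop Filter.atTop)
    (w : ℝ → ℝ)
    (hwmono : ∀ x y : ℝ, 0 ≤ x → x ≤ y → w x ≤ w y)
    (hwnp : ∀ x : ℝ, 0 ≤ x → w x ≤ 0) :
    (∀ φ : ℝ, 0 < φ →
      IntegrableOn
        (fun z => ψ z * z ^ (γ - 2) * Real.exp (-β / z) *
          ((z - lam / c) + lam0 * Kop ν₀ f lam0 lam1 w z))
        (Set.Ioo (0 : ℝ) φ)) ∧
    ∃ φstar : ℝ, 0 < φstar ∧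
      Gop ν₀ f lam lam0 lam1 c γ β ψ w φstar = 0 ∧
      (∀ φ : ℝ, 0 < φ → Gop ν₀ f lam lam0 lam1 c γ β ψ w φ = 0 → φ = φstar) ∧
      (∀ φ : ℝ, 0 < φ → φ < φstar → Gop ν₀ f lam lam0 lam1 c γ β ψ w φ < 0) ∧
      (∀ φ : ℝ, φstar < φ → 0 < Gop ν₀ f lam lam0 lam1 c γ β ψ w φ) ∧
      (∀ φℓ : ℝ, 0 < φℓ →
        (φℓ - lam / c + lam0 * Kop ν₀ f lam0 lam1 w φℓ) = 0 → φℓ ≤ φstar) ∧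
      (∀ φr : ℝ, 0 < φr →
        Gop ν₀ f lam lam0 lam1 c γ β ψ
          (fun _ => -sSup ((fun x => |w x|) '' Set.Ici (0 : ℝ))) φr = 0 →
        φstar ≤ φr) := by
  have hw : MonotoneOn w (Ici 0) := fun x hx y _ hxy => hwmono x y hx hxy
  have hκ : 0 ≤ lam1 / lam0 := (div_pos hlam1 hlam0).le
  have hlam' : 0 < lam + lam0 := by positivity
  have hρ_int := integrableOn_Ioc_psi_weight hμ hlam' hγ hβ hψsmooth hψpos
    (fun x hx y _ hxy => hψmono x y hx hxy) hψode
  have hint : ∀ w : ℝ → ℝ, MonotoneOn w (Ici 0) → (∀ x, 0 ≤ x → w x ≤ 0) → ∀ φ, 0 < φ →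
      IntegrableOn (fun z => ψ z * z ^ (γ - 2) * Real.exp (-β / z) *
        ((z - lam / c) + lam0 * Kop ν₀ f lam0 lam1 w z)) (Ioo 0 φ) := fun w hw hwnp φ hφ =>
    (integrableOn_Ioc_mul_affine hφ.le (hρ_int φ) hlam0.le
      (Kop_monotoneOn (ν₀ := ν₀) hf hf0 hκ hw hwnp)).mono_set Ioo_subset_Ioc_self
  obtain ⟨φs, hφs, hφℓ, hzero, huniq, hneg, hpos⟩ := exists_zero_of_integral_mul_affine
    (fun z hz => hasDerivAt_deriv_div_scale hμ hlam'.ne' hγ hβ hψsmooth hψode hz)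
    (fun z hz => by have := hψpos z hz; positivity) hρ_int
    (hψgrowth.const_mul_atTop (by positivity)) (r := lam / c) (by positivity) hlam0.le
    (Kop_monotoneOn (ν₀ := ν₀) hf hf0 hκ hw hwnp) fun z hz => Kop_mem_Icc hf hf0 hκ hw hwnp hz
  have hG φ (hφ : 0 ≤ φ) := Gop_eq_intervalIntegral ν₀ f lam lam0 lam1 c γ β ψ w hφ
  refine ⟨hint w hw hwnp, φs, hφs, (hG φs hφs.le).trans hzero,
    fun φ hφ hφ0 => huniq φ hφ ((hG φ hφ.le).symm.trans hφ0),
    fun φ hφ hφφs => (hG φ hφ.le).symm ▸ hneg φ ⟨hφ, hφφs⟩,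
    fun φ hφ => (hG φ (hφs.trans hφ).le).symm ▸ hpos φ hφ,
    fun φℓ hφℓ0 hqφℓ => (hφℓ φℓ hφℓ0 hqφℓ).le, fun φr hφr hGr => ?_⟩
  rw [sSup_abs_image_Ici_eq hw hwnp, neg_neg] at hGr
  by_contra! h
  refine ((hG φr hφr.le).symm ▸ hneg φr ⟨hφr, h⟩).not_ge (hGr.symm.trans_le ?_)
  refine Gop_le_Gop_of_Kop_le hlam0.le (fun z hz => (hψpos z hz.1).le)
    (hint _ (fun _ _ _ _ _ => le_rfl) (fun _ _ => hwnp 0 le_rfl) φr hφr)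
    (hint w hw hwnp φr hφr) fun z hz => ?_
  rw [Kop_const]
  exact (Kop_mem_Icc hf hf0 hκ hw hwnp hz.1.le).1

/-- Lemma 4.2: for `w : [0,∞) → ℝ` bounded, continuous, nondecreasing and nonpositive,
(i) the integrand of `Gw` is integrable on `(0, φ)` for every `φ > 0`;
(ii) `(Gw)(φ) = 0` has exactly one solution `φ[w]` in `(0,∞)`;
(iii) `Gw < 0` on `(0, φ[w])` and `Gw > 0` on `(φ[w], ∞)`;
(iv) `φ_ℓ[w] ≤ φ[w] ≤ φ[w₀]`, where `φ_ℓ[w]` is the unique positive zero of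
`g + λ₀ (Kw)` and `w₀ ≡ -sup_{x ≥ 0} |w(x)|`. -/
theorem lemma_4_2
    {E : Type*} [MeasurableSpace E] (ν₀ : Measure E) [IsProbabilityMeasure ν₀]
    (f : E → ℝ) (hf : Measurable f) (hf0 : ∀ z, 0 ≤ f z)
    (lam lam0 lam1 c : ℝ)
    (hlam : 0 < lam) (hlam0 : 0 < lam0) (hlam1 : 0 < lam1) (hc : 0 < c)
    (μ a : ℝ) (hμ : μ ≠ 0) (γ β : ℝ) (hγ : γ = 2 * a / μ ^ 2) (hβ : β = 2 * lam / μ ^ 2)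
    (ψ : ℝ → ℝ)
    (hψsmooth : ContDiffOn ℝ 2 ψ (Set.Ioi (0 : ℝ)))
    (hψpos : ∀ y : ℝ, 0 < y → 0 < ψ y)
    (hψmono : ∀ x y : ℝ, 0 < x → x ≤ y → ψ x ≤ ψ y)
    (hψode : ∀ y : ℝ, 0 < y →
      μ ^ 2 / 2 * y ^ 2 * deriv (deriv ψ) y + (lam + a * y) * deriv ψ y
        = (lam + lam0) * ψ y)
    (hψgrowth : Filter.Tendsto (fun y : ℝ => deriv ψ y * y ^ γ * Real.exp (-β / y))
      Filter.atTop Filter.atTop)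
    (w : ℝ → ℝ)
    (hwbdd : ∃ M : ℝ, ∀ x : ℝ, 0 ≤ x → |w x| ≤ M)
    (hwcont : ContinuousOn w (Set.Ici (0 : ℝ)))
    (hwmono : ∀ x y : ℝ, 0 ≤ x → x ≤ y → w x ≤ w y)
    (hwnp : ∀ x : ℝ, 0 ≤ x → w x ≤ 0) :
    (∀ φ : ℝ, 0 < φ →
      IntegrableOn
        (fun z => ψ z * z ^ (γ - 2) * Real.exp (-β / z) *
          ((z - lam / c) + lam0 * Kop ν₀ f lam0 lam1 w z))
        (Set.Ioo (0 : ℝ) φ)) ∧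
    ∃ φstar : ℝ, 0 < φstar ∧
      Gop ν₀ f lam lam0 lam1 c γ β ψ w φstar = 0 ∧
      (∀ φ : ℝ, 0 < φ → Gop ν₀ f lam lam0 lam1 c γ β ψ w φ = 0 → φ = φstar) ∧
      (∀ φ : ℝ, 0 < φ → φ < φstar → Gop ν₀ f lam lam0 lam1 c γ β ψ w φ < 0) ∧
      (∀ φ : ℝ, φstar < φ → 0 < Gop ν₀ f lam lam0 lam1 c γ β ψ w φ) ∧
      (∀ φℓ : ℝ, 0 < φℓ →
        (φℓ - lam / c + lam0 * Kop ν₀ f lam0 lam1 w φℓ) = 0 → φℓ ≤ φstar) ∧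
      (∀ φr : ℝ, 0 < φr →
        Gop ν₀ f lam lam0 lam1 c γ β ψ
          (fun _ => -sSup ((fun x => |w x|) '' Set.Ici (0 : ℝ))) φr = 0 →
        φstar ≤ φr) :=
  lemma_4_2_general ν₀ f hf hf0 lam lam0 lam1 c hlam hlam0 hlam1 hc μ a hμ γ β hγ hβ ψ hψsmooth
    hψpos hψmono hψode hψgrowth w hwmono hwnp
end

section
/- Let ψ : (0,∞) → (0,∞) be continuously differentiable, positive and nondecreasing with lim_{y→∞} ψ'(y)·y^{γ}·e^{−β/y} = ∞. Then lim_{φ→∞} ψ(φ)·φ^{γ−1} = ∞; equivalently, ψ(φ)/φ^{1−γ} → ∞ as φ → ∞. -/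
/-!
Since `e^{-β/y} → 1`, the hypothesis says `ψ'(y) y^γ → ∞`. If `ψ'(y) y^γ ≥ K` on `[φ/2, φ]`,
then `ψ' ≥ K 2^{-|γ|} φ^{-γ}` there, because `y^γ ≤ 2^{|γ|} φ^γ` on that interval, and the
mean value theorem gives `ψ(φ) > ψ(φ) - ψ(φ/2) ≥ K 2^{-|γ|-1} φ^{1-γ}`.
-/

open Filter Set Real

theorem rpow_le_two_rpow_abs_mul_rpow {x φ : ℝ} (γ : ℝ) (hφ : 0 < φ) (hx : φ / 2 ≤ x)
    (hxφ : x ≤ φ) : x ^ γ ≤ 2 ^ |γ| * φ ^ γ := by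
  have hx0 : 0 < x := by linarith
  rcases le_or_gt 0 γ with hγ | hγ
  · calc x ^ γ ≤ φ ^ γ := rpow_le_rpow hx0.le hxφ hγ
      _ ≤ 2 ^ |γ| * φ ^ γ :=
        le_mul_of_one_le_left (by positivity) (one_le_rpow (by norm_num) (abs_nonneg γ))
  · calc x ^ γ ≤ (φ / 2) ^ γ := rpow_le_rpow_of_nonpos (by positivity) hx hγ.le
      _ = 2 ^ |γ| * φ ^ γ := by
        rw [div_rpow hφ.le zero_le_two, abs_of_neg hγ, rpow_neg zero_le_two, div_eq_inv_mul]

theorem div_two_rpow_le_sub_half_mul_rpow_sub_one {ψ : ℝ → ℝ} {γ K φ : ℝ} (hψ : DifferentiableOn ℝ ψ (Ioi 0))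
    (hφ : 0 < φ) (hK : 0 ≤ K) (hψ' : ∀ y ∈ Icc (φ / 2) φ, K ≤ deriv ψ y * y ^ γ) :
    K / 2 ^ (|γ| + 1) ≤ (ψ φ - ψ (φ / 2)) * φ ^ (γ - 1) := by
  have hsub : Icc (φ / 2) φ ⊆ Ioi 0 := fun y hy => lt_of_lt_of_le (by positivity) hy.1
  have hderiv : ∀ y ∈ interior (Icc (φ / 2) φ), K / (2 ^ |γ| * φ ^ γ) ≤ deriv ψ y := by
    rw [interior_Icc]
    intro y hy
    have hy0 : 0 < y := hsub (Ioo_subset_Icc_self hy)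
    calc K / (2 ^ |γ| * φ ^ γ) ≤ K / y ^ γ :=
          div_le_div_of_nonneg_left hK (by positivity)
            (rpow_le_two_rpow_abs_mul_rpow γ hφ hy.1.le hy.2.le)
      _ ≤ deriv ψ y := (div_le_iff₀ (by positivity)).2 (hψ' y (Ioo_subset_Icc_self hy))
  have hmvt := (convex_Icc (φ / 2) φ).mul_sub_le_image_sub_of_le_deriv
    (hψ.continuousOn.mono hsub) (hψ.mono (interior_subset.trans hsub)) hderiv
    (φ / 2) (left_mem_Icc.2 (by linarith)) φ (right_mem_Icc.2 (by linarith)) (by linarith)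
  calc K / 2 ^ (|γ| + 1) = K / (2 ^ |γ| * φ ^ γ) * (φ - φ / 2) * φ ^ (γ - 1) := by
        rw [rpow_add two_pos, rpow_one, rpow_sub_one hφ.ne']
        field_simp
        ring
    _ ≤ (ψ φ - ψ (φ / 2)) * φ ^ (γ - 1) := by gcongr

theorem tendsto_mul_rpow_sub_one_of_tendsto_deriv_mul_rpow {ψ : ℝ → ℝ} {γ : ℝ}
    (hψ : DifferentiableOn ℝ ψ (Ioi 0)) (hpos : ∀ y, 0 < y → 0 < ψ y)
    (h : Tendsto (fun y => deriv ψ y * y ^ γ) atTop atTop) :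
    Tendsto (fun φ => ψ φ * φ ^ (γ - 1)) atTop atTop := by
  refine tendsto_atTop.2 fun M => ?_
  obtain ⟨R, hR⟩ := eventually_atTop.1 (h.eventually_ge_atTop (2 ^ (|γ| + 1) * max M 0))
  filter_upwards [eventually_gt_atTop (max (2 * R) 0)] with φ hφ
  have hφ0 : 0 < φ := (le_max_right _ _).trans_lt hφ
  have hRφ : R ≤ φ / 2 := by linarith [le_max_left (2 * R) 0]
  calc M ≤ max M 0 := le_max_left _ _
    _ = 2 ^ (|γ| + 1) * max M 0 / 2 ^ (|γ| + 1) := by field_simp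
    _ ≤ (ψ φ - ψ (φ / 2)) * φ ^ (γ - 1) :=
      div_two_rpow_le_sub_half_mul_rpow_sub_one hψ hφ0 (by positivity) fun y hy => hR y (hRφ.trans hy.1)
    _ ≤ ψ φ * φ ^ (γ - 1) := by gcongr; linarith [hpos (φ / 2) (by positivity)]

theorem psi_growth_general (γ β : ℝ) (ψ : ℝ → ℝ)
    (hψsmooth : ContDiffOn ℝ 1 ψ (Set.Ioi (0 : ℝ)))
    (hψpos : ∀ y : ℝ, 0 < y → 0 < ψ y)
    (hψgrowth : Filter.Tendsto (fun y : ℝ => deriv ψ y * y ^ γ * Real.exp (-β / y))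
      Filter.atTop Filter.atTop) :
    Filter.Tendsto (fun φ : ℝ => ψ φ * φ ^ (γ - 1)) Filter.atTop Filter.atTop := by
  have hexp : Tendsto (fun y : ℝ => exp (β / y)) atTop (nhds 1) := by
    simpa [Function.comp_def] using ((continuous_exp.tendsto 0).comp (tendsto_const_nhds.div_atTop tendsto_id))
  refine tendsto_mul_rpow_sub_one_of_tendsto_deriv_mul_rpow
    (hψsmooth.differentiableOn one_ne_zero) hψpos ?_
  refine (hψgrowth.atTop_mul_pos one_pos hexp).congr fun y => ?_
  rw [mul_assoc, neg_div, exp_neg, inv_mul_cancel₀ (exp_pos _).ne', mul_one]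

/-- Growth estimate from the proof of Lemma 4.2: if `ψ : (0,∞) → (0,∞)` is
continuously differentiable, positive and nondecreasing with
`ψ'(y) y^γ e^(-β/y) → ∞` as `y → ∞`, then `ψ(φ) φ^(γ-1) → ∞` as `φ → ∞`. -/
theorem psi_growth (γ β : ℝ) (hβ : 0 < β) (ψ : ℝ → ℝ)
    (hψsmooth : ContDiffOn ℝ 1 ψ (Set.Ioi (0 : ℝ)))
    (hψpos : ∀ y : ℝ, 0 < y → 0 < ψ y)
    (hψmono : ∀ x y : ℝ, 0 < x → x ≤ y → ψ x ≤ ψ y)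
    (hψgrowth : Filter.Tendsto (fun y : ℝ => deriv ψ y * y ^ γ * Real.exp (-β / y))
      Filter.atTop Filter.atTop) :
    Filter.Tendsto (fun φ : ℝ => ψ φ * φ ^ (γ - 1)) Filter.atTop Filter.atTop :=
  psi_growth_general γ β ψ hψsmooth hψpos hψgrowth
end

section
/- Let n ≥ 3 be an integer and suppose the parameters satisfy the series-termination condition λ + λ₀ = (n−1)·a + (μ²/2)·(n−1)·(n−2). Define coefficients β₀ = 1, β₁ = (λ+λ₀)/λ, and β_k = [((λ+λ₀) − (k−1)·a − (μ²/2)·(k−1)·(k−2))/(k·λ)]·β_{k−1} for 2 ≤ k ≤ n−1. Then the polynomial ψ(φ) = Σ_{k=0}^{n−1} β_k·φ^k satisfies (μ²/2)·φ²·ψ''(φ) + (λ + a·φ)·ψ'(φ) = (λ + λ₀)·ψ(φ) for every φ ∈ ℝ. -/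
/-!
Write `ψ` as the truncation below degree `n` of the formal power series with coefficients `β`.
The operator `L = σ x² D² + (λ + a x) D - ν`, with `σ = μ²/2` and `ν = λ + λ₀`, maps it to the
polynomial whose `j`-th coefficient is `λ (j+1) β'_{j+1} - (ν - a j - σ j (j-1)) β'_j`, where `β'`
is `β` cut off at `n`. For `j + 1 < n` this vanishes by the recurrence defining `β`; for
`j + 1 = n` the termination condition is exactly `ν - a j - σ j (j-1) = 0`; beyond that both
coefficients are zero.
-/

/-- The coefficients `β_k` of the polynomial solution `ψ`:
`β₀ = 1`, `β₁ = (λ+λ₀)/λ`, and for `k ≥ 2`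
`β_k = [((λ+λ₀) - (k-1)a - (μ²/2)(k-1)(k-2)) / (kλ)] β_{k-1}`. -/
noncomputable def psiCoef (lam lam0 a μ : ℝ) : ℕ → ℝ
  | 0 => 1
  | 1 => (lam + lam0) / lam
  | (k + 2) =>
      ((lam + lam0 - ((k : ℝ) + 1) * a - μ ^ 2 / 2 * ((k : ℝ) + 1) * (k : ℝ)) /
          (((k : ℝ) + 2) * lam)) * psiCoef lam lam0 a μ (k + 1)

open Polynomial

namespace Polynomial

variable {R : Type*} [CommRing R]

theorem coeff_X_pow_mul_iterate_derivative (p : R[X]) (k n : ℕ) :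
    (X ^ k * derivative^[k] p).coeff n = n.descFactorial k • p.coeff n := by
  rw [coeff_X_pow_mul']
  split_ifs with hk
  · rw [coeff_iterate_derivative, Nat.sub_add_cancel hk]
  · rw [Nat.descFactorial_eq_zero_iff_lt.mpr (not_le.mp hk), zero_smul]

theorem coeff_X_mul_derivative (p : R[X]) (n : ℕ) :
    (X * derivative p).coeff n = n * p.coeff n := by
  simpa [nsmul_eq_mul] using coeff_X_pow_mul_iterate_derivative p 1 n

theorem coeff_X_sq_mul_derivative_derivative (p : R[X]) (n : ℕ) :
    (X ^ 2 * derivative (derivative p)).coeff n = n * (n - 1) * p.coeff n := by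
  rcases n with _ | n
  · simp
  · rw [show derivative (derivative p) = derivative^[2] p from rfl,
      coeff_X_pow_mul_iterate_derivative]
    simp [nsmul_eq_mul, Nat.descFactorial_succ, mul_comm]

end Polynomial

theorem deriv_polynomial_eval {𝕜 : Type*} [NontriviallyNormedField 𝕜] (p : 𝕜[X]) :
    deriv (fun x => p.eval x) = fun x => (derivative p).eval x :=
  funext fun _ => p.deriv

theorem PowerSeries.eval_trunc_mk {R : Type*} [CommSemiring R] (β : ℕ → R) (n : ℕ) (x : R) :
    (trunc n (mk β)).eval x = ∑ k ∈ Finset.range n, β k * x ^ k := by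
  simp [eval, eval₂_trunc_eq_sum_range]

section OdeOperator

variable {R : Type*} [CommRing R] (σ lam a ν : R)

noncomputable def odeOperator (p : R[X]) : R[X] :=
  C σ * X ^ 2 * derivative (derivative p) + (C lam + C a * X) * derivative p - C ν * p

theorem coeff_odeOperator (p : R[X]) (j : ℕ) :
    (odeOperator σ lam a ν p).coeff j =
      lam * (j + 1) * p.coeff (j + 1) - (ν - a * j - σ * j * (j - 1)) * p.coeff j := by
  simp only [odeOperator, mul_assoc, add_mul, coeff_sub, coeff_add, coeff_C_mul,
    coeff_X_mul_derivative, coeff_X_sq_mul_derivative_derivative, coeff_derivative]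
  ring

theorem odeOperator_trunc_mk_eq_zero (β : ℕ → R) (n : ℕ)
    (hrec : ∀ k : ℕ, lam * (k + 1) * β (k + 1) = (ν - a * k - σ * k * (k - 1)) * β k)
    (hterm : ν = ((n : R) - 1) * a + σ * ((n : R) - 1) * ((n : R) - 2)) :
    odeOperator σ lam a ν (PowerSeries.trunc n (PowerSeries.mk β)) = 0 := by
  ext j
  rw [coeff_odeOperator, PowerSeries.coeff_trunc, PowerSeries.coeff_trunc, coeff_zero,
    PowerSeries.coeff_mk, PowerSeries.coeff_mk]
  obtain hj | rfl | hj := lt_trichotomy (j + 1) n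
  · rw [if_pos hj, if_pos (by omega), hrec, sub_self]
  · rw [if_neg (lt_irrefl _), if_pos j.lt_succ_self, hterm]
    push_cast
    ring
  · rw [if_neg (by omega), if_neg (by omega)]
    ring

end OdeOperator

theorem psiCoef_recurrence (lam lam0 a μ : ℝ) (hlam : lam ≠ 0) (k : ℕ) :
    lam * (k + 1) * psiCoef lam lam0 a μ (k + 1) =
      (lam + lam0 - a * k - μ ^ 2 / 2 * k * (k - 1)) * psiCoef lam lam0 a μ k := by
  rcases k with _ | k
  · rw [psiCoef, psiCoef, Nat.cast_zero]
    field_simp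
    ring
  · rw [psiCoef]
    push_cast
    field_simp
    ring

theorem polynomial_solution_general
    (μ lam lam0 a : ℝ) (hlam : 0 < lam)
    (n : ℕ)
    (hterm : lam + lam0 =
      ((n : ℝ) - 1) * a + μ ^ 2 / 2 * ((n : ℝ) - 1) * ((n : ℝ) - 2)) :
    ∀ φ : ℝ,
      μ ^ 2 / 2 * φ ^ 2 *
          deriv (deriv (fun x : ℝ => ∑ k ∈ Finset.range n, psiCoef lam lam0 a μ k * x ^ k)) φ +
        (lam + a * φ) *
          deriv (fun x : ℝ => ∑ k ∈ Finset.range n, psiCoef lam lam0 a μ k * x ^ k) φ =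
      (lam + lam0) * ∑ k ∈ Finset.range n, psiCoef lam lam0 a μ k * φ ^ k := by
  intro φ
  have hode := congrArg (eval φ) <| odeOperator_trunc_mk_eq_zero _ _ _ _ _ n
    (psiCoef_recurrence lam lam0 a μ hlam.ne') hterm
  simp only [odeOperator, eval_sub, eval_add, eval_mul, eval_C, eval_X, eval_pow, eval_zero]
    at hode
  simp only [← PowerSeries.eval_trunc_mk, deriv_polynomial_eval]
  linear_combination hode

/-- For special parameter values (the series-termination condition
`λ + λ₀ = (n-1) a + (μ²/2)(n-1)(n-2)` with `n ≥ 3`), the polynomial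
`ψ(φ) = Σ_{k=0}^{n-1} β_k φ^k` solves `(μ²/2) φ² ψ'' + (λ + a φ) ψ' = (λ + λ₀) ψ` on `ℝ`. -/
theorem polynomial_solution
    (μ lam lam0 a : ℝ) (hμ : μ ≠ 0) (hlam : 0 < lam) (hlam0 : 0 < lam0)
    (n : ℕ) (hn : 3 ≤ n)
    (hterm : lam + lam0 =
      ((n : ℝ) - 1) * a + μ ^ 2 / 2 * ((n : ℝ) - 1) * ((n : ℝ) - 2)) :
    ∀ φ : ℝ,
      μ ^ 2 / 2 * φ ^ 2 *
          deriv (deriv (fun x : ℝ => ∑ k ∈ Finset.range n, psiCoef lam lam0 a μ k * x ^ k)) φ +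
        (lam + a * φ) *
          deriv (fun x : ℝ => ∑ k ∈ Finset.range n, psiCoef lam lam0 a μ k * x ^ k) φ =
      (lam + lam0) * ∑ k ∈ Finset.range n, psiCoef lam lam0 a μ k * φ ^ k :=
  polynomial_solution_general μ lam lam0 a hlam n hterm
end

section
/- For every real α, every β > 0 and every x > 0, the function v ↦ (∫_v^∞ u^α·e^{−βu} du)·v^{−α−2}·e^{βv} is Lebesgue integrable on [x, ∞); that is, ∫_x^∞ (∫_v^∞ u^α·e^{−βu} du)·v^{−α−2}·e^{βv} dv < ∞. -/
/-!
For `x ≤ v ≤ u` write `u^α = v^α (u / v)^α`. The bound `y^n / n! ≤ e^y` with `n = ⌈α⌉₊` gives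
`(u / v)^α ≤ K e^{c (u / v - 1)}` for every `c > 0`, and the choice `c = β x / 2` makes
`c (u / v - 1) ≤ β (u - v) / 2` because `v ≥ x`. Hence `u^α e^{-βu} ≤ K v^α e^{-βv} e^{-β(u - v)/2}`
uniformly, integrating in `u` gives `∫_v^∞ u^α e^{-βu} du ≤ C v^α e^{-βv}`, and the integrand is
`O(v^{-2})` on `[x, ∞)`.
-/

open MeasureTheory Set Real
open scoped Nat

lemma rpow_le_factorial_div_pow_mul_exp (α : ℝ) {c r : ℝ} (hc : 0 < c) (hr : 1 ≤ r) :
    r ^ α ≤ ⌈α⌉₊ ! / c ^ ⌈α⌉₊ * exp (c * r) := by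
  set n := ⌈α⌉₊
  have hcr : (c * r) ^ n / n ! ≤ exp (c * r) := pow_div_factorial_le_exp _ (by positivity) n
  calc r ^ α ≤ r ^ (n : ℝ) := rpow_le_rpow_of_exponent_le hr (Nat.le_ceil α)
    _ = n ! / c ^ n * ((c * r) ^ n / n !) := by
      rw [rpow_natCast, mul_pow]; field_simp
    _ ≤ n ! / c ^ n * exp (c * r) := by gcongr

lemma rpow_mul_exp_neg_le (α : ℝ) {β x : ℝ} (hβ : 0 < β) (hx : 0 < x) :
    ∃ K, ∀ ⦃v u : ℝ⦄, x ≤ v → v ≤ u →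
      u ^ α * exp (-β * u) ≤ K * v ^ α * exp (-(β / 2) * v) * exp (-(β / 2) * u) := by
  set c := β * x / 2
  refine ⟨⌈α⌉₊ ! / c ^ ⌈α⌉₊ * exp c, fun v u hxv hvu => ?_⟩
  have hv : 0 < v := hx.trans_le hxv
  have hu : 0 < u := hv.trans_le hvu
  have hratio : u ^ α ≤ v ^ α * (⌈α⌉₊ ! / c ^ ⌈α⌉₊ * exp (c * (u / v))) := by
    calc u ^ α = v ^ α * (u / v) ^ α := by
          rw [← mul_rpow hv.le (by positivity), mul_div_cancel₀ _ hv.ne']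
      _ ≤ _ := by
        gcongr
        exact rpow_le_factorial_div_pow_mul_exp α (by positivity) ((one_le_div hv).mpr hvu)
  have hexponent : c * (u / v) ≤ c + β / 2 * (u - v) := by
    rw [show c * (u / v) = c + β / 2 * (u - v) * (x / v) by field_simp; ring,
      add_le_add_iff_left]
    exact mul_le_of_le_one_right (by nlinarith) ((div_le_one hv).mpr hxv)
  calc u ^ α * exp (-β * u)
      ≤ v ^ α * (⌈α⌉₊ ! / c ^ ⌈α⌉₊ * exp (c + β / 2 * (u - v))) * exp (-β * u) := by
        gcongr
        exact hratio.trans (by gcongr)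
    _ = _ := by
        have hsplit : exp (β / 2 * (u - v)) * exp (-β * u) =
            exp (-(β / 2) * v) * exp (-(β / 2) * u) := by
          rw [← exp_add, ← exp_add]; ring_nf
        rw [exp_add]
        linear_combination (v ^ α * (⌈α⌉₊ ! / c ^ ⌈α⌉₊) * exp c) * hsplit

lemma integrableOn_rpow_mul_exp_neg_Ioi (α : ℝ) {β v : ℝ} (hβ : 0 < β) (hv : 0 < v) :
    IntegrableOn (fun u => u ^ α * exp (-β * u)) (Ioi v) := by
  obtain ⟨K, hK⟩ := rpow_mul_exp_neg_le α hβ hv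
  refine ((exp_neg_integrableOn_Ioi v (by positivity : 0 < β / 2)).const_mul
    (K * v ^ α * exp (-(β / 2) * v))).mono' (by fun_prop : Measurable _).aestronglyMeasurable ?_
  filter_upwards [ae_restrict_mem measurableSet_Ioi] with u hu
  rw [norm_of_nonneg (by have := hv.trans hu; positivity)]
  exact hK le_rfl hu.le

lemma setIntegral_Ioi_rpow_mul_exp_neg_le (α : ℝ) {β x : ℝ} (hβ : 0 < β) (hx : 0 < x) :
    ∃ C, ∀ ⦃v⦄, x ≤ v → ∫ u in Ioi v, u ^ α * exp (-β * u) ≤ C * (v ^ α * exp (-β * v)) := by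
  obtain ⟨K, hK⟩ := rpow_mul_exp_neg_le α hβ hx
  refine ⟨2 * K / β, fun v hxv => ?_⟩
  have hhalf : exp (-(β / 2) * v) * exp (-(β / 2) * v) = exp (-β * v) := by
    rw [← exp_add]; ring_nf
  calc ∫ u in Ioi v, u ^ α * exp (-β * u)
      ≤ ∫ u in Ioi v, K * v ^ α * exp (-(β / 2) * v) * exp (-(β / 2) * u) :=
        setIntegral_mono_on (integrableOn_rpow_mul_exp_neg_Ioi α hβ (hx.trans_le hxv))
          ((exp_neg_integrableOn_Ioi v (by positivity)).const_mul _) measurableSet_Ioi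
          fun u hu => hK hxv (le_of_lt hu)
    _ = K * v ^ α * exp (-(β / 2) * v) * (-exp (-(β / 2) * v) / -(β / 2)) := by
        rw [integral_const_mul, integral_exp_mul_Ioi (by linarith)]
    _ = 2 * K / β * (v ^ α * exp (-β * v)) := by
        rw [← hhalf]; field_simp

theorem MeasureTheory.StronglyMeasurable.setIntegral_Ioi {E : Type*} [NormedAddCommGroup E]
    [NormedSpace ℝ E] {g : ℝ → E} (hg : StronglyMeasurable g) :
    StronglyMeasurable fun v => ∫ u in Ioi v, g u := by
  simp_rw [← integral_indicator measurableSet_Ioi, indicator_apply, mem_Ioi]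
  exact StronglyMeasurable.integral_prod_right'
    (f := fun p : ℝ × ℝ => if p.1 < p.2 then g p.2 else 0)
    (StronglyMeasurable.ite (_root_.measurableSet_lt measurable_fst measurable_snd)
      (hg.comp_measurable measurable_snd) stronglyMeasurable_const)

lemma norm_setIntegral_Ioi_mul_rpow_mul_exp_le (α : ℝ) {β x : ℝ} (hβ : 0 < β) (hx : 0 < x) :
    ∃ C, ∀ ⦃v⦄, x ≤ v →
      ‖(∫ u in Ioi v, u ^ α * exp (-β * u)) * v ^ (-α - 2) * exp (β * v)‖ ≤ C * v ^ (-2 : ℝ) := by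
  obtain ⟨C, hC⟩ := setIntegral_Ioi_rpow_mul_exp_neg_le α hβ hx
  refine ⟨C, fun v hxv => ?_⟩
  have hv := hx.trans_le hxv
  have htail_nonneg : 0 ≤ ∫ u in Ioi v, u ^ α * exp (-β * u) :=
    setIntegral_nonneg measurableSet_Ioi fun u hu => by have := hv.trans hu; positivity
  rw [norm_of_nonneg (by positivity)]
  calc _ ≤ C * (v ^ α * exp (-β * v)) * v ^ (-α - 2) * exp (β * v) := by gcongr; exact hC hxv
    _ = C * (v ^ α * v ^ (-α - 2)) * (exp (-β * v) * exp (β * v)) := by ring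
    _ = C * v ^ (-2 : ℝ) := by rw [← rpow_add hv, ← exp_add]; ring_nf; simp

/-- Appendix A.1, `N(0) < ∞`: for every real `α`, `β > 0` and `x > 0`, the function
`v ↦ (∫_v^∞ u^α e^(-βu) du) v^(-α-2) e^(βv)` is Lebesgue integrable on `[x, ∞)`. -/
theorem N0_finite (α β x : ℝ) (hβ : 0 < β) (hx : 0 < x) :
    IntegrableOn
      (fun v : ℝ => (∫ u in Set.Ioi v, u ^ α * Real.exp (-β * u)) *
        v ^ (-α - 2) * Real.exp (β * v))
      (Set.Ici x) ∧
    (∫⁻ v in Set.Ici x,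
      ENNReal.ofReal ((∫ u in Set.Ioi v, u ^ α * Real.exp (-β * u)) *
        v ^ (-α - 2) * Real.exp (β * v))) < ⊤ := by
  obtain ⟨C, hC⟩ := norm_setIntegral_Ioi_mul_rpow_mul_exp_le α hβ hx
  have htail : Measurable fun v => ∫ u in Ioi v, u ^ α * exp (-β * u) :=
    (StronglyMeasurable.setIntegral_Ioi (by fun_prop : Measurable _).stronglyMeasurable).measurable
  have hmajorant : IntegrableOn (fun v : ℝ => C * v ^ (-2 : ℝ)) (Ici x) :=
    (Iff.mpr integrableOn_Ici_iff_integrableOn_Ioi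
      (integrableOn_Ioi_rpow_of_lt (by norm_num) hx)).const_mul C
  have hint := hmajorant.mono' (by fun_prop : Measurable _).aestronglyMeasurable
    (ae_restrict_of_forall_mem measurableSet_Ici fun v hv => hC hv)
  exact ⟨hint, hint.lintegral_lt_top⟩
end

section
/- For every real α, every β > 0 and every x > 0, the iterated integral ∫_x^∞ (∫_z^∞ y^{−α−2}·e^{−β/y} dy)·z^α·e^{β/z} dz, taken in the extended half-line [0,∞] (the inner integral may be infinite), equals +∞. -/
open MeasureTheory

/-- The integral of `c / z` over `[x, ∞)` is infinite. -/
lemma lintegral_const_mul_inv_Ici_eq_top {c x : ℝ} (hc : 0 < c) (hx : 0 < x) :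
    ∫⁻ z in Set.Ici x, ENNReal.ofReal (c * z⁻¹) = ⊤ := by
  by_contra h
  have hlt : ∫⁻ z in Set.Ici x, ENNReal.ofReal (c * z⁻¹) < ⊤ := lt_top_iff_ne_top.2 h
  have hmeas : AEStronglyMeasurable (fun z : ℝ => c * z⁻¹)
      (volume.restrict (Set.Ici x)) :=
    (measurable_const.mul measurable_inv).aestronglyMeasurable
  have hnn : 0 ≤ᵐ[volume.restrict (Set.Ici x)] fun z : ℝ => c * z⁻¹ := by
    filter_upwards [ae_restrict_mem measurableSet_Ici] with z hz
    exact mul_nonneg hc.le (inv_nonneg.2 ((hx.le.trans hz)))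
  have hint : IntegrableOn (fun z : ℝ => c * z⁻¹) (Set.Ici x) :=
    ⟨hmeas, (hasFiniteIntegral_iff_ofReal hnn).2 hlt⟩
  have hint2 : IntegrableOn (fun z : ℝ => z⁻¹) (Set.Ici x) := by
    rwa [IntegrableOn, integrable_const_mul_iff (isUnit_iff_ne_zero.2 hc.ne')] at hint
  have hint3 : IntegrableOn (fun z : ℝ => z ^ (-1 : ℝ)) (Set.Ioi x) := by
    refine (hint2.mono Set.Ioi_subset_Ici_self le_rfl).congr_fun
      (fun y _ => (Real.rpow_neg_one y).symm) measurableSet_Ioi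
  exact absurd ((integrableOn_Ioi_rpow_iff hx).1 hint3) (lt_irrefl _)

/-- Appendix A.1, `N(∞) = ∞`: for every real `α`, `β > 0` and `x > 0`, the iterated
integral `∫_x^∞ (∫_z^∞ y^(-α-2) e^(-β/y) dy) z^α e^(β/z) dz`, taken in `[0,∞]`,
equals `+∞`. -/
theorem N_infty_eq_top (α β x : ℝ) (hβ : 0 < β) (hx : 0 < x) :
    ∫⁻ z in Set.Ici x,
      (∫⁻ y in Set.Ioi z, ENNReal.ofReal (y ^ (-α - 2) * Real.exp (-β / y))) *
        ENNReal.ofReal (z ^ α * Real.exp (β / z)) = ⊤ := by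
  set c : ℝ := min 1 (2 ^ (-α - 2)) with hc_def
  have hc : 0 < c := lt_min one_pos (Real.rpow_pos_of_pos two_pos _)
  -- lower bound for the integrand on `Ici x`
  have key : ∀ z ∈ Set.Ici x,
      ENNReal.ofReal (c * z⁻¹) ≤
        (∫⁻ y in Set.Ioi z, ENNReal.ofReal (y ^ (-α - 2) * Real.exp (-β / y))) *
          ENNReal.ofReal (z ^ α * Real.exp (β / z)) := by
    intro z hz
    have hz0 : 0 < z := hx.trans_le hz
    -- inner integral lower bound
    have inner_bd : ENNReal.ofReal (c * z ^ (-α - 1) * Real.exp (-β / z)) ≤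
        ∫⁻ y in Set.Ioi z, ENNReal.ofReal (y ^ (-α - 2) * Real.exp (-β / y)) := by
      have hsub : Set.Ioc z (2 * z) ⊆ Set.Ioi z := Set.Ioc_subset_Ioi_self
      have h1 : ∫⁻ y in Set.Ioc z (2 * z),
          ENNReal.ofReal (y ^ (-α - 2) * Real.exp (-β / y)) ≤
          ∫⁻ y in Set.Ioi z, ENNReal.ofReal (y ^ (-α - 2) * Real.exp (-β / y)) :=
        lintegral_mono_set hsub
      have h2 : ∫⁻ _ in Set.Ioc z (2 * z),
          ENNReal.ofReal (c * z ^ (-α - 2) * Real.exp (-β / z)) ≤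
          ∫⁻ y in Set.Ioc z (2 * z),
            ENNReal.ofReal (y ^ (-α - 2) * Real.exp (-β / y)) := by
        refine setLIntegral_mono' measurableSet_Ioc fun y hy => ?_
        have hy0 : 0 < y := hz0.trans hy.1
        refine ENNReal.ofReal_le_ofReal ?_
        have hexp : Real.exp (-β / z) ≤ Real.exp (-β / y) := by
          apply Real.exp_le_exp.2
          rw [neg_div, neg_div, neg_le_neg_iff]
          exact div_le_div_of_nonneg_left hβ.le hz0 hy.1.le
        have hpow : c * z ^ (-α - 2) ≤ y ^ (-α - 2) := by
          rcases le_or_gt 0 (-α - 2) with hs | hs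
          · calc c * z ^ (-α - 2) ≤ 1 * z ^ (-α - 2) := by
                  exact mul_le_mul_of_nonneg_right (min_le_left _ _)
                    (Real.rpow_nonneg hz0.le _)
              _ = z ^ (-α - 2) := one_mul _
              _ ≤ y ^ (-α - 2) := Real.rpow_le_rpow hz0.le hy.1.le hs
          · calc c * z ^ (-α - 2) ≤ 2 ^ (-α - 2) * z ^ (-α - 2) :=
                  mul_le_mul_of_nonneg_right (min_le_right _ _)
                    (Real.rpow_nonneg hz0.le _)
              _ = (2 * z) ^ (-α - 2) :=
                  (Real.mul_rpow (by norm_num) hz0.le).symm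
              _ ≤ y ^ (-α - 2) := Real.rpow_le_rpow_of_nonpos hy0 hy.2 hs.le
        calc c * z ^ (-α - 2) * Real.exp (-β / z)
            ≤ y ^ (-α - 2) * Real.exp (-β / z) :=
              mul_le_mul_of_nonneg_right hpow (Real.exp_nonneg _)
          _ ≤ y ^ (-α - 2) * Real.exp (-β / y) :=
              mul_le_mul_of_nonneg_left hexp (Real.rpow_nonneg hy0.le _)
      have h3 : ∫⁻ _ in Set.Ioc z (2 * z),
          ENNReal.ofReal (c * z ^ (-α - 2) * Real.exp (-β / z)) =
          ENNReal.ofReal (c * z ^ (-α - 1) * Real.exp (-β / z)) := by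
        rw [setLIntegral_const, Real.volume_Ioc, ← ENNReal.ofReal_mul
          (by positivity : (0:ℝ) ≤ c * z ^ (-α - 2) * Real.exp (-β / z))]
        congr 1
        have hz1 : z ^ (-α - 2) * z = z ^ (-α - 1) := by
          rw [show (-α - 1) = (-α - 2) + 1 by ring, Real.rpow_add_one hz0.ne']
        have h4 : 2 * z - z = z := by ring
        rw [h4]
        calc c * z ^ (-α - 2) * Real.exp (-β / z) * z
            = c * (z ^ (-α - 2) * z) * Real.exp (-β / z) := by ring
          _ = c * z ^ (-α - 1) * Real.exp (-β / z) := by rw [hz1]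
      calc ENNReal.ofReal (c * z ^ (-α - 1) * Real.exp (-β / z))
          = ∫⁻ _ in Set.Ioc z (2 * z),
              ENNReal.ofReal (c * z ^ (-α - 2) * Real.exp (-β / z)) := h3.symm
        _ ≤ _ := h2.trans h1
    -- combine
    have hprod : ENNReal.ofReal (c * z ^ (-α - 1) * Real.exp (-β / z)) *
        ENNReal.ofReal (z ^ α * Real.exp (β / z)) = ENNReal.ofReal (c * z⁻¹) := by
      rw [← ENNReal.ofReal_mul (by positivity)]
      congr 1
      have h1 : z ^ (-α - 1) * z ^ α = z⁻¹ := by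
        rw [← Real.rpow_add hz0, show -α - 1 + α = (-1 : ℝ) by ring,
          Real.rpow_neg_one]
      have h2 : Real.exp (-β / z) * Real.exp (β / z) = 1 := by
        rw [← Real.exp_add]
        rw [show -β / z + β / z = 0 by ring, Real.exp_zero]
      calc c * z ^ (-α - 1) * Real.exp (-β / z) * (z ^ α * Real.exp (β / z))
          = c * (z ^ (-α - 1) * z ^ α) * (Real.exp (-β / z) * Real.exp (β / z)) := by
            ring
        _ = c * z⁻¹ := by rw [h1, h2, mul_one]
    calc ENNReal.ofReal (c * z⁻¹)
        = ENNReal.ofReal (c * z ^ (-α - 1) * Real.exp (-β / z)) *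
            ENNReal.ofReal (z ^ α * Real.exp (β / z)) := hprod.symm
      _ ≤ _ := mul_le_mul_left inner_bd _
  have hmono : ∫⁻ z in Set.Ici x, ENNReal.ofReal (c * z⁻¹) ≤
      ∫⁻ z in Set.Ici x,
        (∫⁻ y in Set.Ioi z, ENNReal.ofReal (y ^ (-α - 2) * Real.exp (-β / y))) *
          ENNReal.ofReal (z ^ α * Real.exp (β / z)) :=
    setLIntegral_mono' measurableSet_Ici key
  exact top_le_iff.1 (lintegral_const_mul_inv_Ici_eq_top hc hx ▸ hmono)
end
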